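/- arXiv:1705.06958 — 2 statements merged into one kernel-verified Lean document; each statement's English description precedes it below -/
import Mathlib

section
/- Let A be a skew brace and r its canonical Yang–Baxter solution r(a,b) = (λ_a(b), μ_b(a)) with μ_b(a) = (λ_a(b))⁻̄ ∘ a ∘ b. Then for all n ≥ 0: r^{2n}(a,b) = ((a∘b)^{-n}·a·(a∘b)^n, (overline of that element) ∘ a ∘ b), where powers (a∘b)^n are taken in (A,·). Consequently r^{2n} = id if and only if a·bⁿ = bⁿ·a for all a,b ∈ A. -/
/-- A skew brace: a set `A` with two group operations, the "additive" one given by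
the ambient `Group A` instance (written multiplicatively, `·`), and a second group
operation `circ` (`∘`) with identity `cone` and inverses `cinv`, satisfying the
compatibility `a ∘ (b · c) = (a ∘ b) · a⁻¹ · (a ∘ c)`. -/
structure SkewBrace (A : Type*) [Group A] where
  circ : A → A → A
  circ_assoc : ∀ a b c : A, circ (circ a b) c = circ a (circ b c)
  cone : A
  cone_circ : ∀ a : A, circ cone a = a
  circ_cone : ∀ a : A, circ a cone = a
  cinv : A → A
  cinv_circ : ∀ a : A, circ (cinv a) a = cone
  circ_cinv : ∀ a : A, circ a (cinv a) = cone
  compat : ∀ a b c : A, circ a (b * c) = circ a b * a⁻¹ * circ a c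

/-!
In the coordinates `(x, s) = (a, a ∘ b)` the solution reads `(x, s) ↦ (x⁻¹ · s, s)`: the product
`a ∘ b` is invariant, so `r²` conjugates the first coordinate by `s` and `r^{2n}` by `sⁿ`.
-/

theorem inv_mul_mul_eq_self_iff {G : Type*} [Group G] (g x : G) :
    g⁻¹ * x * g = x ↔ x * g = g * x := by
  rw [mul_assoc, inv_mul_eq_iff_eq_mul]

namespace SkewBrace

variable {A : Type*} [Group A] (B : SkewBrace A)

theorem cinv_circ_circ (a b : A) : B.circ (B.cinv a) (B.circ a b) = b := by
  rw [← B.circ_assoc, B.cinv_circ, B.cone_circ]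

theorem circ_cinv_circ (a b : A) : B.circ a (B.circ (B.cinv a) b) = b := by
  rw [← B.circ_assoc, B.circ_cinv, B.cone_circ]

def solution (p : A × A) : A × A :=
  (p.1⁻¹ * B.circ p.1 p.2, B.circ (B.cinv (p.1⁻¹ * B.circ p.1 p.2)) (B.circ p.1 p.2))

def pairWithCirc (x s : A) : A × A :=
  (x, B.circ (B.cinv x) s)

theorem pairWithCirc_circ (a b : A) : B.pairWithCirc a (B.circ a b) = (a, b) := by
  rw [pairWithCirc, cinv_circ_circ]

theorem solution_pairWithCirc (x s : A) :
    B.solution (B.pairWithCirc x s) = B.pairWithCirc (x⁻¹ * s) s := by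
  simp only [solution, pairWithCirc, circ_cinv_circ]

theorem solution_iterate_two_pairWithCirc (x s : A) :
    B.solution^[2] (B.pairWithCirc x s) = B.pairWithCirc (s⁻¹ * x * s) s := by
  rw [Function.iterate_succ_apply, Function.iterate_one, solution_pairWithCirc,
    solution_pairWithCirc, mul_inv_rev, inv_inv, mul_assoc]

theorem solution_iterate_two_mul_pairWithCirc (n : ℕ) (x s : A) :
    B.solution^[2 * n] (B.pairWithCirc x s) = B.pairWithCirc ((s ^ n)⁻¹ * x * s ^ n) s := by
  induction n generalizing x with
  | zero => simp
  | succ n ih =>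
    rw [Function.iterate_mul, Function.iterate_succ_apply, ← Function.iterate_mul,
      solution_iterate_two_pairWithCirc, ih]
    congr 1
    group

theorem solution_iterate_two_mul (n : ℕ) (a b : A) :
    B.solution^[2 * n] (a, b) =
      (((B.circ a b) ^ n)⁻¹ * a * (B.circ a b) ^ n,
        B.circ (B.cinv (((B.circ a b) ^ n)⁻¹ * a * (B.circ a b) ^ n)) (B.circ a b)) := by
  rw [← B.pairWithCirc_circ a b, solution_iterate_two_mul_pairWithCirc]
  rfl

theorem solution_iterate_two_mul_eq_id_iff (n : ℕ) :
    B.solution^[2 * n] = id ↔ ∀ a b : A, a * b ^ n = b ^ n * a := by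
  constructor
  · intro h a b
    have hconj := congrArg Prod.fst (congrFun h (B.pairWithCirc a b))
    rw [solution_iterate_two_mul_pairWithCirc] at hconj
    exact (inv_mul_mul_eq_self_iff _ _).1 hconj
  · intro h
    funext ⟨a, b⟩
    rw [← B.pairWithCirc_circ a b, solution_iterate_two_mul_pairWithCirc,
      (inv_mul_mul_eq_self_iff _ _).2 (h a _)]
    rfl

end SkewBrace

/-- For the canonical solution `r(a,b) = (λ_a(b), μ_b(a))` of a skew brace, for all
`n ≥ 0`, `r^{2n}(a,b) = (c, c̄ ∘ a ∘ b)` with `c = (a∘b)^{-n}·a·(a∘b)^n` (powers in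
`(A,·)`), and consequently `r^{2n} = id` iff `a·bⁿ = bⁿ·a` for all `a, b`. -/
theorem skewBrace_r_even_powers {A : Type*} [Group A] (B : SkewBrace A) :
    ∀ r : A × A → A × A,
      (∀ a b : A, r (a, b) = (a⁻¹ * B.circ a b,
        B.circ (B.cinv (a⁻¹ * B.circ a b)) (B.circ a b))) →
      (∀ n : ℕ, ∀ a b : A,
        r^[2 * n] (a, b) =
          (((B.circ a b) ^ n)⁻¹ * a * (B.circ a b) ^ n,
            B.circ (B.cinv (((B.circ a b) ^ n)⁻¹ * a * (B.circ a b) ^ n))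
              (B.circ a b))) ∧
      (∀ n : ℕ, (r^[2 * n] = id ↔ ∀ a b : A, a * b ^ n = b ^ n * a)) := by
  intro r hr
  obtain rfl : r = B.solution := funext fun ⟨a, b⟩ => hr a b
  exact ⟨B.solution_iterate_two_mul, B.solution_iterate_two_mul_eq_id_iff⟩
end

section
/- Let A be a skew brace. Then the additive group (A,·) with the binary operation a•b = λ_a⁻¹(b) is a skew cycle set: each map b ↦ a•b is bijective, a•(b·c) = (a•b)·(a•c), and (a·b)•c = (a•b)•(a•c) for all a,b,c ∈ A. Conversely, if (A,·,•) is a skew cycle set then A with a∘b = a·(a*b), where * is the inverse operation of •, is a skew brace. -/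
/-- A skew cycle set: a group `(A,·)` with a binary operation `•` such that each left
translation is bijective, `a•(bc) = (a•b)(a•c)` and `(ab)•c = (a•b)•(a•c)`. -/
structure SkewCycleSet (A : Type*) [Group A] where
  dot : A → A → A
  bij : ∀ a : A, Function.Bijective (dot a)
  dist : ∀ a b c : A, dot a (b * c) = dot a b * dot a c
  cond : ∀ a b c : A, dot (a * b) c = dot (dot a b) (dot a c)

namespace SkewBrace

variable {A : Type*} [Group A] (B : SkewBrace A)

def lam (a b : A) : A := a⁻¹ * B.circ a b

lemma circ_one (a : A) : B.circ a 1 = a := by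
  have h := B.compat a 1 1
  rw [one_mul, mul_assoc, left_eq_mul, inv_mul_eq_one] at h
  exact h.symm

lemma cone_eq_one : B.cone = 1 := by
  simpa only [B.cone_circ] using (B.circ_one B.cone).symm

lemma circ_inv (a b : A) : B.circ a b⁻¹ = a * (B.circ a b)⁻¹ * a := by
  have h := B.compat a b b⁻¹
  rw [mul_inv_cancel, circ_one] at h
  rw [eq_inv_mul_iff_mul_eq.mpr h.symm, mul_inv_rev, inv_inv]

lemma lam_mul (a b c : A) : B.lam a (b * c) = B.lam a b * B.lam a c := by
  simp only [lam, B.compat]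
  group

lemma lam_circ (a b c : A) : B.lam (B.circ a b) c = B.lam a (B.lam b c) := by
  simp only [lam]
  rw [B.compat, circ_inv, ← B.circ_assoc]
  group

lemma lam_cone (c : A) : B.lam B.cone c = c := by
  rw [lam, B.cone_circ, cone_eq_one, inv_one, one_mul]

lemma lam_lam_cinv (a c : A) : B.lam a (B.lam (B.cinv a) c) = c := by
  rw [← lam_circ, B.circ_cinv, lam_cone]

lemma lam_cinv_lam (a c : A) : B.lam (B.cinv a) (B.lam a c) = c := by
  rw [← lam_circ, B.cinv_circ, lam_cone]

lemma circ_lam_cinv (a b : A) : B.circ a (B.lam (B.cinv a) b) = a * b := by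
  conv_rhs => rw [← B.lam_lam_cinv a b, lam, mul_inv_cancel_left]

lemma eq_cinv_of_circ_eq_cone {a b : A} (h : B.circ a b = B.cone) : a = B.cinv b := by
  rw [← B.circ_cone a, ← B.circ_cinv b, ← B.circ_assoc, h, B.cone_circ]

lemma cinv_circ_rev (a b : A) : B.cinv (B.circ a b) = B.circ (B.cinv b) (B.cinv a) := by
  refine (B.eq_cinv_of_circ_eq_cone ?_).symm
  rw [B.circ_assoc, ← B.circ_assoc (B.cinv a), B.cinv_circ, B.cone_circ, B.cinv_circ]

def dot (a b : A) : A := B.circ (B.cinv a) (a * b)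

lemma dot_eq_lam (a b : A) : B.dot a b = B.lam (B.cinv a) b := by
  rw [dot, lam, B.compat, B.cinv_circ, cone_eq_one, one_mul]

def toSkewCycleSet : SkewCycleSet A where
  dot := B.dot
  bij a := by
    refine Function.bijective_iff_has_inverse.mpr ⟨B.lam a, fun b => ?_, fun b => ?_⟩
    · rw [dot_eq_lam, lam_lam_cinv]
    · rw [dot_eq_lam, lam_cinv_lam]
  dist a b c := by simp only [dot_eq_lam, lam_mul]
  cond a b c := by
    simp only [dot_eq_lam]
    rw [← B.circ_lam_cinv a b, cinv_circ_rev, lam_circ]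

end SkewBrace

namespace SkewCycleSet

variable {A : Type*} [Group A] (S : SkewCycleSet A)

noncomputable def tau (a : A) : A → A := Function.invFun (S.dot a)

lemma tau_dot (a b : A) : S.tau a (S.dot a b) = b :=
  Function.leftInverse_invFun (S.bij a).1 b

lemma dot_tau (a b : A) : S.dot a (S.tau a b) = b :=
  Function.rightInverse_invFun (S.bij a).2 b

lemma dot_one (a : A) : S.dot a 1 = 1 := by
  simpa only [one_mul, left_eq_mul] using S.dist a 1 1

lemma one_dot (c : A) : S.dot 1 c = c := by
  have h := S.cond 1 1 c
  rw [one_mul, dot_one] at h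
  exact ((S.bij 1).1 h).symm

lemma one_tau (c : A) : S.tau 1 c = c := by
  simpa only [one_dot] using S.tau_dot 1 c

lemma tau_one (a : A) : S.tau a 1 = 1 := by
  simpa only [dot_one] using S.tau_dot a 1

lemma tau_mul (a b c : A) : S.tau a (b * c) = S.tau a b * S.tau a c := by
  apply (S.bij a).1
  rw [dot_tau, S.dist, dot_tau, dot_tau]

lemma tau_mul_tau (a b c : A) : S.tau (a * S.tau a b) c = S.tau a (S.tau b c) := by
  apply (S.bij (a * S.tau a b)).1
  rw [dot_tau, S.cond, dot_tau, dot_tau, dot_tau]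

noncomputable def circ (a b : A) : A := a * S.tau a b

lemma circ_assoc (a b c : A) : S.circ (S.circ a b) c = S.circ a (S.circ b c) := by
  rw [circ, circ, tau_mul_tau, circ, circ, tau_mul, mul_assoc]

lemma one_circ (a : A) : S.circ 1 a = a := by
  rw [circ, one_tau, one_mul]

lemma circ_one (a : A) : S.circ a 1 = a := by
  rw [circ, tau_one, mul_one]

lemma circ_dot_inv (a : A) : S.circ a (S.dot a a⁻¹) = 1 := by
  rw [circ, tau_dot, mul_inv_cancel]

-- In a monoid where every element has a right inverse, right inverses are two-sided.
lemma dot_inv_circ (a : A) : S.circ (S.dot a a⁻¹) a = 1 := by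
  set b := S.dot a a⁻¹
  have hab : S.circ a b = 1 := S.circ_dot_inv a
  have hbc : S.circ b (S.dot b b⁻¹) = 1 := S.circ_dot_inv b
  calc S.circ b a = S.circ (S.circ b a) (S.circ b (S.dot b b⁻¹)) := by rw [hbc, circ_one]
    _ = S.circ b (S.circ (S.circ a b) (S.dot b b⁻¹)) := by rw [circ_assoc, circ_assoc]
    _ = 1 := by rw [hab, one_circ, hbc]

lemma circ_mul (a b c : A) : S.circ a (b * c) = S.circ a b * a⁻¹ * S.circ a c := by
  simp only [circ, tau_mul]
  group

noncomputable def toSkewBrace : SkewBrace A where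
  circ := S.circ
  circ_assoc := S.circ_assoc
  cone := 1
  cone_circ := S.one_circ
  circ_cone := S.circ_one
  cinv a := S.dot a a⁻¹
  cinv_circ := S.dot_inv_circ
  circ_cinv := S.circ_dot_inv
  compat := S.circ_mul

end SkewCycleSet

/-- Every skew brace gives a skew cycle set via `a • b = λ_a⁻¹(b) = ā ∘ (a·b)`, and
conversely every skew cycle set gives a skew brace via `a ∘ b = a · (a * b)` where
`*` is the inverse operation of `•`. -/
theorem skewBrace_equiv_skewCycleSet {A : Type*} [Group A] :
    (∀ B : SkewBrace A, ∃ S : SkewCycleSet A,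
      ∀ a b : A, S.dot a b = B.circ (B.cinv a) (a * b)) ∧
    (∀ S : SkewCycleSet A, ∃ B : SkewBrace A,
      ∀ a b : A, B.circ a b = a * Function.invFun (S.dot a) b) :=
  ⟨fun B => ⟨B.toSkewCycleSet, fun _ _ => rfl⟩, fun S => ⟨S.toSkewBrace, fun _ _ => rfl⟩⟩
end
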